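/- Let S be a recursively enumerable set of nonempty lists of natural numbers and let X ∈ V(S). Then X is computable (ComputablePred (· ∈ X)) if and only if X is both recursively presented (some recursively enumerable Y has C(Y) = X) and recursively discriminable (some recursively enumerable Y is a discriminator for X). -/

import Mathlib

/-- A set `X ⊆ ℕ` satisfies the Horn implications encoded by `S`:
a list `n₀ :: t ∈ S` means `(∀ m ∈ t, m ∈ X) → n₀ ∈ X`. -/
def SatisfiesHorn (S : Set (List ℕ)) (X : Set ℕ) : Prop :=
  ∀ n₀ : ℕ, ∀ t : List ℕ, (n₀ :: t) ∈ S → (∀ m ∈ t, m ∈ X) → n₀ ∈ X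

/-- The quasivariety defined by `S`. -/
def QV (S : Set (List ℕ)) : Set (Set ℕ) := {X | SatisfiesHorn S X}

/-- The closure of `Y`: the smallest element of `QV S` containing `Y`. -/
def QVclosure (S : Set (List ℕ)) (Y : Set ℕ) : Set ℕ :=
  ⋂₀ {X | X ∈ QV S ∧ Y ⊆ X}

/-- `A` is enumeration reducible to `B` via `f`. -/
def EnumRedVia (A B : Set ℕ) (f : ℕ × ℕ → Option (Finset ℕ)) : Prop :=
  Computable f ∧
    ∀ x : ℕ, x ∈ A ↔ ∃ n : ℕ, ∃ F : Finset ℕ, f (x, n) = some F ∧ ↑F ⊆ B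

/-- `A` is enumeration reducible to `B`. -/
def EnumRed (A B : Set ℕ) : Prop := ∃ f : ℕ × ℕ → Option (Finset ℕ), EnumRedVia A B f

/-- `Y` is a discriminator for `X` in `QV S`: `Y` misses `X`, and every strictly
larger point of `QV S` meets `Y`. -/
def Discriminator (S : Set (List ℕ)) (X Y : Set ℕ) : Prop :=
  Y ∩ X = ∅ ∧ ∀ Z ∈ QV S, X ⊂ Z → Z ∩ Y ≠ ∅

/-!
If `X` is computable, it presents itself and its complement is a discriminator. Conversely, the
closure of an r.e. set under r.e. Horn clauses is r.e., since it consists of the conclusions of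
finite ranked derivations, and this holds uniformly in r.e. families of generators. So `X = C(Y₁)`
is r.e.; and `x ∉ X` iff `C(X ∪ {x})`, a point of `V(S)` strictly above `X` exactly when `x ∉ X`,
meets the r.e. discriminator, which makes the complement of `X` r.e. as well. Post's theorem
concludes.
-/

section REPred

open Encodable

variable {α β : Type*} [Primcodable α] [Primcodable β]

open Primrec in
theorem PrimrecRel.rePred_exists {R : α → β → Prop} (hR : PrimrecRel R) :
    REPred fun a => ∃ b, R a b := by
  classical
  have hf : Computable₂ fun (a : α) (n : ℕ) =>
      (decode n : Option β).bind fun b => if R a b then some b else none :=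
    (option_bind (Primrec.decode.comp snd)
      (Primrec.ite (hR.comp (fst.comp fst) snd) (option_some.comp snd) (const none)).to₂).to_comp
  refine (Partrec.rfindOpt hf).dom_re.of_eq fun a => ?_
  rw [Nat.rfindOpt_dom]
  constructor
  · rintro ⟨n, b, hb⟩
    simp only [Option.mem_def, Option.bind_eq_some_iff, Option.ite_none_right_eq_some,
      Option.some.injEq] at hb
    obtain ⟨b', -, hR, rfl⟩ := hb
    exact ⟨b', hR⟩
  · rintro ⟨b, hb⟩
    exact ⟨encode b, b, by simp [hb]⟩

open Primrec in
theorem REPred.exists_monotone_primrecRel {p : α → Prop} (hp : REPred p) :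
    ∃ P : α → ℕ → Prop, PrimrecRel P ∧ (∀ a, Monotone (P a)) ∧ ∀ a, p a ↔ ∃ k, P a k := by
  obtain ⟨c, hc⟩ := Nat.Partrec.Code.exists_code.1 hp
  refine ⟨fun a k => (c.evaln k (encode a)).isSome, ?_, ?_, fun a => ?_⟩
  · exact PrimrecPred.comp Primrec.eq ((option_isSome.comp (Nat.Partrec.Code.primrec_evaln.comp
      ((snd.pair (const c)).pair (Primrec.encode.comp fst)))).pair (const true))
  · intro a k k' hk h
    obtain ⟨x, hx⟩ := Option.isSome_iff_exists.1 h
    exact Option.isSome_iff_exists.2 ⟨x, Nat.Partrec.Code.evaln_mono hk hx⟩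
  · have heq := congrFun hc (encode a)
    simp only [Encodable.encodek, Part.coe_some] at heq
    simp only [Option.isSome_iff_exists]
    rw [exists_comm]
    simp only [← Option.mem_def, ← Nat.Partrec.Code.evaln_complete, heq]
    simp

theorem REPred.comp {p : β → Prop} (hp : REPred p) {f : α → β} (hf : Computable f) :
    REPred fun a => p (f a) :=
  Partrec.comp hp hf

open Primrec in
protected theorem REPred.and {p q : α → Prop} (hp : REPred p) (hq : REPred q) :
    REPred fun a => p a ∧ q a := by
  obtain ⟨P, hP, -, hpP⟩ := hp.exists_monotone_primrecRel
  obtain ⟨Q, hQ, -, hqQ⟩ := hq.exists_monotone_primrecRel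
  refine (PrimrecRel.rePred_exists (R := fun a (k : ℕ × ℕ) => P a k.1 ∧ Q a k.2)
    ((hP.comp fst (fst.comp snd)).and (hQ.comp fst (snd.comp snd)))).of_eq fun a => ?_
  simp only [hpP, hqQ, Prod.exists, exists_and_left, exists_and_right]

open Primrec in
protected theorem REPred.or {p q : α → Prop} (hp : REPred p) (hq : REPred q) :
    REPred fun a => p a ∨ q a := by
  obtain ⟨P, hP, -, hpP⟩ := hp.exists_monotone_primrecRel
  obtain ⟨Q, hQ, -, hqQ⟩ := hq.exists_monotone_primrecRel
  refine (PrimrecRel.rePred_exists (R := fun a k => P a k ∨ Q a k) (hP.or hQ)).of_eq fun a => ?_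
  simp only [hpP, hqQ, exists_or]

open Primrec in
protected theorem REPred.exists {p : α → β → Prop} (hp : REPred fun x : α × β => p x.1 x.2) :
    REPred fun a => ∃ b, p a b := by
  obtain ⟨P, hP, -, hpP⟩ := hp.exists_monotone_primrecRel
  refine (PrimrecRel.rePred_exists (R := fun a (bk : β × ℕ) => P (a, bk.1) bk.2)
    (hP.comp (fst.pair (fst.comp snd)) (snd.comp snd))).of_eq fun a => ?_
  simp only [fun b => hpP (a, b), Prod.exists]

open Primrec in
theorem REPred.forall_mem_list {p : α → β → Prop} (hp : REPred fun x : α × β => p x.1 x.2) :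
    REPred fun x : α × List β => ∀ b ∈ x.2, p x.1 b := by
  obtain ⟨P, hP, hmono, hpP⟩ := hp.exists_monotone_primrecRel
  have hR : PrimrecRel fun (x : α × List β) k => ∀ b ∈ x.2, P (x.1, b) k :=
    (PrimrecRel.forall_mem_list (R := fun b (y : α × ℕ) => P (y.1, b) y.2)
      (hP.comp ((fst.comp snd).pair fst) (snd.comp snd))).comp
        (snd.comp fst) ((fst.comp fst).pair snd)
  refine (PrimrecRel.rePred_exists hR).of_eq fun ⟨a, L⟩ => ?_
  simp only [fun b => hpP (a, b)]
  induction L with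
  | nil => simp
  | cons b L ih =>
    simp only [List.forall_mem_cons]
    rw [← ih]
    constructor
    · rintro ⟨k, hk, hk'⟩
      exact ⟨⟨k, hk⟩, k, hk'⟩
    · rintro ⟨⟨k, hk⟩, k', hk'⟩
      exact ⟨max k k', hmono _ (le_max_left k k') hk,
        fun c hc => hmono _ (le_max_right k k') (hk' c hc)⟩

end REPred

theorem QVclosure_mem_QV (S : Set (List ℕ)) (Y : Set ℕ) : QVclosure S Y ∈ QV S :=
  fun n₀ t hS ht => Set.mem_sInter.2 fun X hX =>
    hX.1 n₀ t hS fun m hm => Set.mem_sInter.1 (ht m hm) X hX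

theorem subset_QVclosure (S : Set (List ℕ)) (Y : Set ℕ) : Y ⊆ QVclosure S Y :=
  fun _ hy => Set.mem_sInter.2 fun _ hX => hX.2 hy

theorem QVclosure_subset {S : Set (List ℕ)} {X Y : Set ℕ} (hX : X ∈ QV S) (hY : Y ⊆ X) :
    QVclosure S Y ⊆ X :=
  Set.sInter_subset_of_mem ⟨hX, hY⟩

theorem QVclosure_eq_self {S : Set (List ℕ)} {X : Set ℕ} (hX : X ∈ QV S) : QVclosure S X = X :=
  (QVclosure_subset hX subset_rfl).antisymm (subset_QVclosure S X)

theorem discriminator_compl (S : Set (List ℕ)) (X : Set ℕ) : Discriminator S X Xᶜ := by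
  refine ⟨Set.compl_inter_self X, fun Z _ hXZ => ?_⟩
  obtain ⟨z, hzZ, hzX⟩ := Set.exists_of_ssubset hXZ
  exact Set.nonempty_iff_ne_empty.1 ⟨z, hzZ, hzX⟩

theorem Discriminator.notMem_iff {S : Set (List ℕ)} {X Y : Set ℕ} (hX : X ∈ QV S)
    (hY : Discriminator S X Y) (x : ℕ) :
    x ∉ X ↔ ∃ y, y ∈ QVclosure S (insert x X) ∧ y ∈ Y := by
  constructor
  · intro hx
    have hXZ : X ⊂ QVclosure S (insert x X) :=
      (Set.ssubset_insert hx).trans_subset (subset_QVclosure S _)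
    obtain ⟨y, hyZ, hyY⟩ := Set.nonempty_iff_ne_empty.2 (hY.2 _ (QVclosure_mem_QV S _) hXZ)
    exact ⟨y, hyZ, hyY⟩
  · rintro ⟨y, hyZ, hyY⟩ hx
    rw [Set.insert_eq_of_mem hx, QVclosure_eq_self hX] at hyZ
    exact (Set.eq_empty_iff_forall_notMem.1 hY.1) y ⟨hyY, hyZ⟩

/-- An entry `(r, n₀, t)` of a derivation concludes `n₀` at rank `r`, either because `n₀` is a
generator or by the clause `n₀ :: t`; `IsGrounded` asks the premises `t` to be concluded at smaller
ranks. -/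
def IsJustified (S : Set (List ℕ)) (Y : Set ℕ) (e : ℕ × ℕ × List ℕ) : Prop :=
  e.2.1 :: e.2.2 ∈ S ∨ e.2.1 ∈ Y

def IsGrounded (D : List (ℕ × ℕ × List ℕ)) : Prop :=
  ∀ e ∈ D, ∀ m ∈ e.2.2, ∃ e' ∈ D, e'.2.1 = m ∧ e'.1 < e.1

def IsDerivation (S : Set (List ℕ)) (Y : Set ℕ) (D : List (ℕ × ℕ × List ℕ)) : Prop :=
  (∀ e ∈ D, IsJustified S Y e) ∧ IsGrounded D

section Derivation

variable {S : Set (List ℕ)} {Y : Set ℕ} {D D' : List (ℕ × ℕ × List ℕ)}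

theorem IsDerivation.nil : IsDerivation S Y [] :=
  ⟨fun _ h => absurd h List.not_mem_nil, fun _ h => absurd h List.not_mem_nil⟩

theorem IsDerivation.append (hD : IsDerivation S Y D) (hD' : IsDerivation S Y D') :
    IsDerivation S Y (D ++ D') := by
  refine ⟨fun e he => (List.mem_append.1 he).elim (hD.1 e) (hD'.1 e), fun e he m hm => ?_⟩
  rcases List.mem_append.1 he with he | he
  · obtain ⟨e', he', h⟩ := hD.2 e he m hm
    exact ⟨e', List.mem_append_left _ he', h⟩
  · obtain ⟨e', he', h⟩ := hD'.2 e he m hm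
    exact ⟨e', List.mem_append_right _ he', h⟩

theorem IsDerivation.cons_clause (hD : IsDerivation S Y D) {n₀ : ℕ} {t : List ℕ}
    (hS : n₀ :: t ∈ S) (ht : ∀ m ∈ t, ∃ e ∈ D, e.2.1 = m) :
    IsDerivation S Y (((D.map Prod.fst).sum + 1, n₀, t) :: D) := by
  have hrank : ∀ e ∈ D, e.1 < (D.map Prod.fst).sum + 1 := fun e he =>
    Nat.lt_succ_of_le (List.le_sum_of_mem (List.mem_map_of_mem he))
  refine ⟨List.forall_mem_cons.2 ⟨Or.inl hS, hD.1⟩, List.forall_mem_cons.2 ⟨?_, ?_⟩⟩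
  · intro m hm
    obtain ⟨e, he, rfl⟩ := ht m hm
    exact ⟨e, List.mem_cons_of_mem _ he, rfl, hrank e he⟩
  · intro e he m hm
    obtain ⟨e', he', h⟩ := hD.2 e he m hm
    exact ⟨e', List.mem_cons_of_mem _ he', h⟩

theorem IsDerivation.conclusion_mem (hD : IsDerivation S Y D) {X : Set ℕ} (hX : X ∈ QV S)
    (hY : Y ⊆ X) {e : ℕ × ℕ × List ℕ} (he : e ∈ D) : e.2.1 ∈ X := by
  suffices ∀ r, ∀ e ∈ D, e.1 = r → e.2.1 ∈ X from this _ e he rfl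
  intro r
  induction r using Nat.strong_induction_on with
  | _ r ih =>
    rintro e he rfl
    rcases hD.1 e he with hS | hYe
    · refine hX _ _ hS fun m hm => ?_
      obtain ⟨e', he', rfl, hlt⟩ := hD.2 e he m hm
      exact ih _ hlt e' he' rfl
    · exact hY hYe

variable (S Y) in
def derivableSet : Set ℕ := {n | ∃ D, IsDerivation S Y D ∧ ∃ e ∈ D, e.2.1 = n}

theorem exists_derivation_of_forall_mem_derivableSet {t : List ℕ}
    (ht : ∀ m ∈ t, m ∈ derivableSet S Y) :
    ∃ D, IsDerivation S Y D ∧ ∀ m ∈ t, ∃ e ∈ D, e.2.1 = m := by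
  induction t with
  | nil => exact ⟨[], .nil, fun _ h => absurd h List.not_mem_nil⟩
  | cons m t ih =>
    obtain ⟨⟨D, hD, hm⟩, ht⟩ := List.forall_mem_cons.1 ht
    obtain ⟨D', hD', ht'⟩ := ih ht
    refine ⟨D ++ D', hD.append hD', List.forall_mem_cons.2 ⟨?_, fun k hk => ?_⟩⟩
    · obtain ⟨e, he, h⟩ := hm
      exact ⟨e, List.mem_append_left _ he, h⟩
    · obtain ⟨e, he, h⟩ := ht' k hk
      exact ⟨e, List.mem_append_right _ he, h⟩

theorem derivableSet_mem_QV : derivableSet S Y ∈ QV S := by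
  intro n₀ t hS ht
  obtain ⟨D, hD, htD⟩ := exists_derivation_of_forall_mem_derivableSet ht
  exact ⟨_, hD.cons_clause hS htD, _, List.mem_cons_self, rfl⟩

theorem subset_derivableSet : Y ⊆ derivableSet S Y := fun n hn =>
  ⟨[(0, n, [])], ⟨List.forall_mem_singleton.2 (Or.inr hn),
    List.forall_mem_singleton.2 fun _ h => absurd h List.not_mem_nil⟩,
    _, List.mem_singleton_self _, rfl⟩

theorem QVclosure_eq_derivableSet : QVclosure S Y = derivableSet S Y := by
  refine (QVclosure_subset derivableSet_mem_QV subset_derivableSet).antisymm ?_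
  rintro n ⟨D, hD, e, he, rfl⟩
  exact hD.conclusion_mem (QVclosure_mem_QV S Y) (subset_QVclosure S Y) he

end Derivation

open Primrec in
theorem primrecPred_isGrounded : PrimrecPred IsGrounded := by
  have hlt : PrimrecRel fun (e' : ℕ × ℕ × List ℕ) (q : ℕ × ℕ × ℕ × List ℕ) =>
      e'.2.1 = q.1 ∧ e'.1 < q.2.1 :=
    (Primrec.eq.comp (fst.comp (snd.comp fst)) (fst.comp snd)).and
      (Primrec.nat_lt.comp (fst.comp fst) (fst.comp (snd.comp snd)))
  have hprem : PrimrecRel fun (m : ℕ) (p : (ℕ × ℕ × List ℕ) × List (ℕ × ℕ × List ℕ)) =>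
      ∃ e' ∈ p.2, e'.2.1 = m ∧ e'.1 < p.1.1 :=
    hlt.exists_mem_list.comp (snd.comp snd) (fst.pair (fst.comp snd))
  have hentry : PrimrecRel fun (e : ℕ × ℕ × List ℕ) (D : List (ℕ × ℕ × List ℕ)) =>
      ∀ m ∈ e.2.2, ∃ e' ∈ D, e'.2.1 = m ∧ e'.1 < e.1 :=
    hprem.forall_mem_list.comp (snd.comp (snd.comp fst)) (fst.pair snd)
  exact hentry.forall_mem_list.comp Primrec.id Primrec.id

open Computable in
theorem rePred_mem_QVclosure_uniform {α : Type*} [Primcodable α] {S : Set (List ℕ)}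
    (hS : REPred (· ∈ S)) {Y : α → Set ℕ} (hY : REPred fun x : α × ℕ => x.2 ∈ Y x.1) :
    REPred fun x : α × ℕ => x.2 ∈ QVclosure S (Y x.1) := by
  have hjust : REPred fun x : (α × ℕ) × List (ℕ × ℕ × List ℕ) =>
      ∀ e ∈ x.2, IsJustified S (Y x.1.1) e :=
    REPred.forall_mem_list (p := fun (a : α × ℕ) e => IsJustified S (Y a.1) e) (REPred.or
      (hS.comp (Primrec.list_cons.to_comp.comp (fst.comp (snd.comp snd)) (snd.comp (snd.comp snd))))
      (hY.comp ((fst.comp fst).pair (fst.comp (snd.comp snd)))))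
  have hconcl : PrimrecPred fun x : (α × ℕ) × List (ℕ × ℕ × List ℕ) =>
      IsGrounded x.2 ∧ ∃ e ∈ x.2, e.2.1 = x.1.2 :=
    (primrecPred_isGrounded.comp Primrec.snd).and
      ((PrimrecRel.exists_mem_list (R := fun (e : ℕ × ℕ × List ℕ) (n : ℕ) => e.2.1 = n)
        (Primrec.eq.comp (Primrec.fst.comp (Primrec.snd.comp Primrec.fst)) Primrec.snd)).comp
          Primrec.snd (Primrec.snd.comp Primrec.fst))
  refine (REPred.exists (p := fun x D => (∀ e ∈ D, IsJustified S (Y x.1) e) ∧ IsGrounded D ∧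
    ∃ e ∈ D, e.2.1 = x.2) (hjust.and hconcl.computablePred.to_re)).of_eq fun x => ?_
  simp only [QVclosure_eq_derivableSet, derivableSet, IsDerivation, Set.mem_ofPred_eq, and_assoc]

theorem rePred_mem_QVclosure {S : Set (List ℕ)} (hS : REPred (· ∈ S)) {Y : Set ℕ}
    (hY : REPred (· ∈ Y)) : REPred (· ∈ QVclosure S Y) :=
  (rePred_mem_QVclosure_uniform (Y := fun _ : Unit => Y) hS (hY.comp Computable.snd)).comp
    ((Computable.const ()).pair Computable.id)

theorem computable_iff_recursively_presented_and_discriminable_general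
    (S : Set (List ℕ)) (hS : REPred (· ∈ S))
    (X : Set ℕ) (hX : X ∈ QV S) :
    ComputablePred (· ∈ X) ↔
      ((∃ Y : Set ℕ, REPred (· ∈ Y) ∧ QVclosure S Y = X) ∧
       (∃ Y : Set ℕ, REPred (· ∈ Y) ∧ Discriminator S X Y)) := by
  rw [ComputablePred.computable_iff_re_compl_re']
  constructor
  · rintro ⟨hre, hcompl⟩
    exact ⟨⟨X, hre, QVclosure_eq_self hX⟩, Xᶜ, hcompl, discriminator_compl S X⟩
  · rintro ⟨⟨Y₁, hY₁, hcl⟩, Y₂, hY₂, hdisc⟩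
    have hre : REPred (· ∈ X) := hcl ▸ rePred_mem_QVclosure hS hY₁
    have hinsert : REPred fun x : ℕ × ℕ => x.2 ∈ insert x.1 X :=
      ((Primrec.eq.comp Primrec.snd Primrec.fst).computablePred.to_re).or (hre.comp Computable.snd)
    have hmeets : REPred fun x : ℕ × ℕ => x.2 ∈ QVclosure S (insert x.1 X) ∧ x.2 ∈ Y₂ :=
      (rePred_mem_QVclosure_uniform (Y := fun x => insert x X) hS hinsert).and
        (hY₂.comp Computable.snd)
    exact ⟨hre, (REPred.exists (p := fun x y => y ∈ QVclosure S (insert x X) ∧ y ∈ Y₂)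
      hmeets).of_eq fun x => (hdisc.notMem_iff hX x).symm⟩

/-- A point of an r.e. quasivariety is computable iff it is recursively
presented and recursively discriminable. -/
theorem computable_iff_recursively_presented_and_discriminable
    (S : Set (List ℕ)) (hne : ∀ l ∈ S, l ≠ []) (hS : REPred (· ∈ S))
    (X : Set ℕ) (hX : X ∈ QV S) :
    ComputablePred (· ∈ X) ↔
      ((∃ Y : Set ℕ, REPred (· ∈ Y) ∧ QVclosure S Y = X) ∧
       (∃ Y : Set ℕ, REPred (· ∈ Y) ∧ Discriminator S X Y)) :=
  computable_iff_recursively_presented_and_discriminable_general S hS X hX
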